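/- arXiv:1101.0221 — 9 statements merged into one kernel-verified Lean document; each statement's English description precedes it below -/
import Mathlib

section
/- Let R be a 2-torsion free ring and G = (δ_i)_{i∈ℕ} an additive generalized Jordan higher derivation on R whose relating family D = (τ_i)_{i∈ℕ} is a higher derivation. Then for every n ∈ ℕ and all X, Y ∈ R, δ_n(XYX) = Σ_{i+j+k=n} δ_i(X)τ_j(Y)τ_k(X). -/
/-!
Encode the families as generating series `∑ₙ δₙ(x) tⁿ` and `∑ₙ τₙ(x) tⁿ` in `R⟦t⟧`: then `τ` becomes a
multiplicative additive map and `δ` an additive map with `δ(x²) = δ(x)τ(x)`, and the statement becomes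
the coefficientwise form of `δ(xyx) = δ(x)τ(y)τ(x)`. This identity holds for any such pair of maps into
any ring: linearizing the Jordan identity gives `δ(xy + yx) = δ(x)τ(y) + δ(y)τ(x)`, and evaluating
`δ(x(xy + yx) + (xy + yx)x)` once through this formula and once as `δ(x²y + yx²) + 2δ(xyx)` shows that
`2δ(xyx) = 2δ(x)τ(y)τ(x)`. Two-torsion freeness of `R` passes to `R⟦t⟧` coefficientwise.
-/

open Finset PowerSeries

section JordanIdentity

variable {R S : Type*} [Ring R] [Ring S] (f : R →+ S) (g : R →ₙ+* S)

theorem map_mul_add_mul_of_map_mul_self (hJ : ∀ x, f (x * x) = f x * g x) (x y : R) :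
    f (x * y + y * x) = f x * g y + f y * g x := by
  have h := hJ (x + y)
  rw [show (x + y) * (x + y) = x * x + y * y + (x * y + y * x) by noncomm_ring,
    map_add, map_add, hJ, hJ] at h
  simp only [map_add, mul_add, add_mul] at h ⊢
  exact add_left_cancel (h.trans (by abel))

theorem map_mul_mul_add_self_of_map_mul_self (hJ : ∀ x, f (x * x) = f x * g x) (x y : R) :
    f (x * y * x) + f (x * y * x) = f x * g y * g x + f x * g y * g x := by
  have hlin := map_mul_add_mul_of_map_mul_self f g hJ
  have h := hlin x (x * y + y * x)
  rw [show x * (x * y + y * x) + (x * y + y * x) * x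
      = x * x * y + y * (x * x) + (x * y * x + x * y * x) by noncomm_ring,
    map_add, hlin (x * x) y, hJ, hlin x y, map_add] at h
  simp only [map_mul, map_add, mul_add, add_mul, mul_assoc] at h ⊢
  exact add_left_cancel (h.trans (by abel))

end JordanIdentity

theorem eq_of_add_self_eq_add_self {R : Type*} [AddCommGroup R] (htf : ∀ x : R, x + x = 0 → x = 0)
    {a b : R} (h : a + a = b + b) : a = b :=
  sub_eq_zero.mp (htf _ (by rw [sub_add_sub_comm, h, sub_self]))

namespace PowerSeries

variable {R : Type*} [Ring R]

def mkAddMonoidHom (f : ℕ → R → R) (hf : ∀ n x y, f n (x + y) = f n x + f n y) : R →+ R⟦X⟧ :=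
  AddMonoidHom.mk' (fun x => mk fun n => f n x) fun x y => by ext n; simp [hf]

@[simp]
theorem coeff_mkAddMonoidHom (f : ℕ → R → R) (hf : ∀ n x y, f n (x + y) = f n x + f n y)
    (n : ℕ) (x : R) : coeff n (mkAddMonoidHom f hf x) = f n x :=
  coeff_mk n fun n => f n x

def mkNonUnitalRingHom (f : ℕ → R → R) (hf : ∀ n x y, f n (x + y) = f n x + f n y)
    (hmul : ∀ n x y, f n (x * y) = ∑ ij ∈ antidiagonal n, f ij.1 x * f ij.2 y) :
    R →ₙ+* R⟦X⟧ :=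
  { mkAddMonoidHom f hf with
    map_mul' := fun x y => by ext n; simp [hmul, coeff_mul] }

@[simp]
theorem coeff_mkNonUnitalRingHom (f : ℕ → R → R) (hf : ∀ n x y, f n (x + y) = f n x + f n y)
    (hmul : ∀ n x y, f n (x * y) = ∑ ij ∈ antidiagonal n, f ij.1 x * f ij.2 y)
    (n : ℕ) (x : R) : coeff n (mkNonUnitalRingHom f hf hmul x) = f n x :=
  coeff_mk n fun n => f n x

end PowerSeries

theorem stmt1_general {R : Type*} [Ring R]
    (htf : ∀ x : R, x + x = 0 → x = 0)
    (δ τ : ℕ → R → R)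
    (hδadd : ∀ n X Y, δ n (X + Y) = δ n X + δ n Y)
    (hτadd : ∀ n X Y, τ n (X + Y) = τ n X + τ n Y)
    (hτHD : ∀ n X Y, τ n (X * Y) = ∑ ij ∈ Finset.HasAntidiagonal.antidiagonal n, τ ij.1 X * τ ij.2 Y)
    (hδJ : ∀ n X, δ n (X * X) = ∑ ij ∈ Finset.HasAntidiagonal.antidiagonal n, δ ij.1 X * τ ij.2 X) :
    ∀ n X Y, δ n (X * Y * X) =
      ∑ ij ∈ Finset.HasAntidiagonal.antidiagonal n, ∑ kl ∈ Finset.HasAntidiagonal.antidiagonal ij.2,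
        δ ij.1 X * τ kl.1 Y * τ kl.2 X := by
  intro n X Y
  set d := mkAddMonoidHom δ hδadd
  set t := mkNonUnitalRingHom τ hτadd hτHD
  have hJ : ∀ x, d (x * x) = d x * t x := fun x => by
    ext m; simp [d, t, hδJ, coeff_mul]
  have h := congrArg (coeff n) (map_mul_mul_add_self_of_map_mul_self d t hJ X Y)
  refine eq_of_add_self_eq_add_self htf ?_
  simpa [d, t, coeff_mul, mul_sum, mul_assoc] using h

/-- Lemma 2.1(2): if `R` is 2-torsion free and `G = (δ_i)` is an additive generalized
Jordan higher derivation on `R` whose relating family `D = (τ_i)` is a higher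
derivation, then `δ_n(XYX) = Σ_{i+j+k=n} δ_i(X)τ_j(Y)τ_k(X)`. -/
theorem stmt1 {R : Type*} [Ring R]
    (htf : ∀ x : R, x + x = 0 → x = 0)
    (δ τ : ℕ → R → R)
    (hδ0 : δ 0 = id) (hτ0 : τ 0 = id)
    (hδadd : ∀ n X Y, δ n (X + Y) = δ n X + δ n Y)
    (hτadd : ∀ n X Y, τ n (X + Y) = τ n X + τ n Y)
    (hτHD : ∀ n X Y, τ n (X * Y) = ∑ ij ∈ Finset.HasAntidiagonal.antidiagonal n, τ ij.1 X * τ ij.2 Y)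
    (hδJ : ∀ n X, δ n (X * X) = ∑ ij ∈ Finset.HasAntidiagonal.antidiagonal n, δ ij.1 X * τ ij.2 X) :
    ∀ n X Y, δ n (X * Y * X) =
      ∑ ij ∈ Finset.HasAntidiagonal.antidiagonal n, ∑ kl ∈ Finset.HasAntidiagonal.antidiagonal ij.2,
        δ ij.1 X * τ kl.1 Y * τ kl.2 X :=
  stmt1_general htf δ τ hδadd hτadd hτHD hδJ
end

section
/- Let P be an idempotent in a ring R and D = (τ_i)_{i∈ℕ} a higher derivation on R such that τ_n(P) ∈ P R (1−P) for all n ≥ 1, where R is unital. Then for every X ∈ R and every n ≥ 1, τ_n(PX(1−P)) ∈ P R (1−P), provided (1−P)RP = {0}. -/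
/-!
Write `Q = 1 - P`. Expanding `τ n (P * (X * Q))` by the Leibniz rule, every term begins with some
`τ k P ∈ P R`, so `τ n (P * X * Q) ∈ P R`. Expanding `0 = τ n ((P * X * Q) * P)` instead and
multiplying by `P` on the right kills every term containing `τ k P` with `k ≥ 1`, because
`τ k P * P ∈ P R Q P = 0`; what remains is `τ n (P * X * Q) * P = 0`, i.e. `τ n (P * X * Q) ∈ R Q`.
-/

open Finset

section HigherDerivation

variable {R : Type*} [Ring R] {τ : ℕ → R → R}

theorem map_zero_of_map_add (hτadd : ∀ n X Y, τ n (X + Y) = τ n X + τ n Y) (n : ℕ) :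
    τ n 0 = 0 := by
  have h := hτadd n 0 0
  rw [add_zero] at h
  exact left_eq_add.mp h

theorem mul_map_mul_left_eq {e : R}
    (hτHD : ∀ n X Y, τ n (X * Y) = ∑ ij ∈ antidiagonal n, τ ij.1 X * τ ij.2 Y)
    (he : ∀ k, e * τ k e = τ k e) (X : R) (n : ℕ) :
    e * τ n (e * X) = τ n (e * X) := by
  rw [hτHD, mul_sum]
  exact sum_congr rfl fun ij _ => by rw [← mul_assoc, he]

theorem map_mul_eq_zero_of_mul_eq_zero {e Y : R} (hτ0 : τ 0 = id)
    (hτadd : ∀ n X Y, τ n (X + Y) = τ n X + τ n Y)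
    (hτHD : ∀ n X Y, τ n (X * Y) = ∑ ij ∈ antidiagonal n, τ ij.1 X * τ ij.2 Y)
    (he : e * e = e) (hτe : ∀ k, 1 ≤ k → τ k e * e = 0) (hY : Y * e = 0) (n : ℕ) :
    τ n Y * e = 0 := by
  have hexpand : τ n (Y * e) * e = τ n Y * e := by
    rw [hτHD, sum_mul, sum_eq_single (n, 0)]
    · rw [hτ0, id, mul_assoc, he]
    · rintro ⟨i, j⟩ hij hne
      have hj : 1 ≤ j := by
        rw [HasAntidiagonal.mem_antidiagonal] at hij
        by_contra! hj0
        exact hne (by simp only [Prod.mk.injEq]; omega)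
      rw [mul_assoc, hτe j hj, mul_zero]
    · simp
  rw [← hexpand, hY, map_zero_of_map_add hτadd, zero_mul]

end HigherDerivation

theorem stmt3_general {R : Type*} [Ring R] (P : R) (hP : P * P = P)
    (τ : ℕ → R → R)
    (hτ0 : τ 0 = id)
    (hτadd : ∀ n X Y, τ n (X + Y) = τ n X + τ n Y)
    (hτHD : ∀ n X Y, τ n (X * Y) = ∑ ij ∈ Finset.HasAntidiagonal.antidiagonal n, τ ij.1 X * τ ij.2 Y)
    (hτP : ∀ n, 1 ≤ n → ∃ s : R, τ n P = P * s * (1 - P)) :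
    ∀ (X : R) (n : ℕ), 1 ≤ n → ∃ s : R, τ n (P * X * (1 - P)) = P * s * (1 - P) := by
  have hQP : (1 - P) * P = 0 := by rw [sub_mul, one_mul, hP, sub_self]
  intro X n _
  set Y := P * X * (1 - P) with hY
  have hleft : P * τ n Y = τ n Y := by
    rw [hY, mul_assoc]
    refine mul_map_mul_left_eq hτHD (fun k => ?_) _ n
    rcases Nat.eq_zero_or_pos k with rfl | hk
    · rw [hτ0, id, hP]
    · obtain ⟨s, hs⟩ := hτP k hk
      rw [hs, ← mul_assoc, ← mul_assoc, hP]
  have hright : τ n Y * (1 - P) = τ n Y := by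
    suffices τ n Y * P = 0 by rw [mul_sub, mul_one, this, sub_zero]
    refine map_mul_eq_zero_of_mul_eq_zero hτ0 hτadd hτHD hP (fun k hk => ?_) ?_ n
    · obtain ⟨s, hs⟩ := hτP k hk
      rw [hs, mul_assoc, hQP, mul_zero]
    · rw [hY, mul_assoc, hQP, mul_zero]
  exact ⟨τ n Y, by rw [mul_assoc, hright, hleft]⟩

/-- Let `R` be a unital ring, `P` an idempotent with `(1-P)RP = {0}`, and
`D = (τ_i)` a higher derivation on `R` with `τ_n(P) ∈ PR(1-P)` for all `n ≥ 1`.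
Then `τ_n(PX(1-P)) ∈ PR(1-P)` for every `X ∈ R` and `n ≥ 1`. -/
theorem stmt3 {R : Type*} [Ring R] (P : R) (hP : P * P = P)
    (hQRP : ∀ s : R, (1 - P) * s * P = 0)
    (τ : ℕ → R → R)
    (hτ0 : τ 0 = id)
    (hτadd : ∀ n X Y, τ n (X + Y) = τ n X + τ n Y)
    (hτHD : ∀ n X Y, τ n (X * Y) = ∑ ij ∈ Finset.HasAntidiagonal.antidiagonal n, τ ij.1 X * τ ij.2 Y)
    (hτP : ∀ n, 1 ≤ n → ∃ s : R, τ n P = P * s * (1 - P)) :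
    ∀ (X : R) (n : ℕ), 1 ≤ n → ∃ s : R, τ n (P * X * (1 - P)) = P * s * (1 - P) :=
  stmt3_general P hP τ hτ0 hτadd hτHD hτP
end

section
/- Let R be a unital ring, P an idempotent with (1−P)RP = {0}, Q = 1−P, and D = (τ_i)_{i∈ℕ} a higher derivation on R with τ_n(P) ∈ PRQ for all n ≥ 1. Then for every X ∈ R and every n ≥ 1, τ_n(PXP) ∈ PRP + PRQ. -/
/-!
Write `PXP = P · (XP)` and expand `τₙ` by the Leibniz rule of the higher derivation:
every term starts with some `τᵢ(P)`, which lies in `PR` (for `i = 0` because `P` is idempotent,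
for `i ≥ 1` by hypothesis). Hence `τₙ(PXP) ∈ PR`, and any `y` with `Py = y` splits as
`y = PyP + Py(1 - P)`.
-/

section HigherDerivation

variable {R : Type*} [Ring R] {τ : ℕ → R → R}

theorem mul_apply_mul_eq_of_forall_mul_apply_eq
    (hτHD : ∀ n X Y, τ n (X * Y) = ∑ ij ∈ Finset.HasAntidiagonal.antidiagonal n, τ ij.1 X * τ ij.2 Y)
    {e a : R} (ha : ∀ i, e * τ i a = τ i a) (n : ℕ) (b : R) :
    e * τ n (a * b) = τ n (a * b) := by
  rw [hτHD, Finset.mul_sum]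
  exact Finset.sum_congr rfl fun ij _ => by rw [← mul_assoc, ha]

theorem idempotent_mul_apply_self {P : R} (hP : P * P = P) (hτ0 : τ 0 = id)
    (hτP : ∀ n, 1 ≤ n → ∃ s : R, τ n P = P * s * (1 - P)) (i : ℕ) :
    P * τ i P = τ i P := by
  rcases Nat.eq_zero_or_pos i with rfl | hi
  · rw [hτ0, id_eq, hP]
  · obtain ⟨s, hs⟩ := hτP i hi
    rw [hs, ← mul_assoc, ← mul_assoc, hP]

end HigherDerivation

theorem stmt4_general {R : Type*} [Ring R] (P : R) (hP : P * P = P)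
    (τ : ℕ → R → R)
    (hτ0 : τ 0 = id)
    (hτHD : ∀ n X Y, τ n (X * Y) = ∑ ij ∈ Finset.HasAntidiagonal.antidiagonal n, τ ij.1 X * τ ij.2 Y)
    (hτP : ∀ n, 1 ≤ n → ∃ s : R, τ n P = P * s * (1 - P)) :
    ∀ (X : R) (n : ℕ), 1 ≤ n →
      ∃ s t : R, τ n (P * X * P) = P * s * P + P * t * (1 - P) := by
  intro X n _
  have hPy : P * τ n (P * (X * P)) = τ n (P * (X * P)) :=
    mul_apply_mul_eq_of_forall_mul_apply_eq hτHD (idempotent_mul_apply_self hP hτ0 hτP) n (X * P)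
  refine ⟨τ n (P * X * P), τ n (P * X * P), ?_⟩
  rw [mul_sub, mul_one, add_sub_cancel, mul_assoc P X P, hPy]

/-- Let `R` be a unital ring, `P` an idempotent with `(1-P)RP = {0}`, `Q = 1 - P`,
and `D = (τ_i)` a higher derivation on `R` with `τ_n(P) ∈ PRQ` for all `n ≥ 1`.
Then `τ_n(PXP) ∈ PRP + PRQ` for every `X ∈ R` and every `n ≥ 1`. -/
theorem stmt4 {R : Type*} [Ring R] (P : R) (hP : P * P = P)
    (hQRP : ∀ s : R, (1 - P) * s * P = 0)
    (τ : ℕ → R → R)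
    (hτ0 : τ 0 = id)
    (hτadd : ∀ n X Y, τ n (X + Y) = τ n X + τ n Y)
    (hτHD : ∀ n X Y, τ n (X * Y) = ∑ ij ∈ Finset.HasAntidiagonal.antidiagonal n, τ ij.1 X * τ ij.2 Y)
    (hτP : ∀ n, 1 ≤ n → ∃ s : R, τ n P = P * s * (1 - P)) :
    ∀ (X : R) (n : ℕ), 1 ≤ n →
      ∃ s t : R, τ n (P * X * P) = P * s * P + P * t * (1 - P) :=
  stmt4_general P hP τ hτ0 hτHD hτP
end

section
/- Let R be a unital ring, P an idempotent with (1−P)RP = {0}, Q = 1−P, and D = (τ_i)_{i∈ℕ} a higher derivation on R with τ_n(Q) ∈ PRQ for all n ≥ 1. Then for every X ∈ R and every n ≥ 1, τ_n(QXQ) ∈ QRQ + PRQ. -/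
/-- Let `R` be a unital ring, `P` an idempotent with `(1-P)RP = {0}`, `Q = 1 - P`,
and `D = (τ_i)` a higher derivation on `R` with `τ_n(Q) ∈ PRQ` for all `n ≥ 1`.
Then `τ_n(QXQ) ∈ QRQ + PRQ` for every `X ∈ R` and every `n ≥ 1`. -/
theorem stmt5 {R : Type*} [Ring R] (P : R) (hP : P * P = P)
    (hQRP : ∀ s : R, (1 - P) * s * P = 0)
    (τ : ℕ → R → R)
    (hτ0 : τ 0 = id)
    (hτadd : ∀ n X Y, τ n (X + Y) = τ n X + τ n Y)
    (hτHD : ∀ n X Y, τ n (X * Y) = ∑ ij ∈ Finset.HasAntidiagonal.antidiagonal n, τ ij.1 X * τ ij.2 Y)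
    (hτQ : ∀ n, 1 ≤ n → ∃ s : R, τ n (1 - P) = P * s * (1 - P)) :
    ∀ (X : R) (n : ℕ), 1 ≤ n →
      ∃ s t : R, τ n ((1 - P) * X * (1 - P)) =
        (1 - P) * s * (1 - P) + P * t * (1 - P) := by
  intro X n hn
  set A : R := (1 - P) * X * (1 - P) with hA
  have hQP : (1 - P) * P = 0 := by
    rw [sub_mul, one_mul, hP, sub_self]
  have hQQ : (1 - P) * (1 - P) = (1 - P) := by
    rw [mul_sub, mul_one, hQP, sub_zero]
  have hAQ : A = A * (1 - P) := by
    conv_rhs => rw [hA, mul_assoc ((1 - P) * X), hQQ]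
  -- expand τ n (A * Q)
  have hexp : τ n A = (∑ k ∈ Finset.range n, τ k A * τ (n - k) (1 - P))
      + τ n A * (1 - P) := by
    conv_lhs => rw [hAQ]
    rw [hτHD, Finset.Nat.sum_antidiagonal_eq_sum_range_succ_mk,
      Finset.sum_range_succ, Nat.sub_self, hτ0]
    simp
  have hsumP : (∑ k ∈ Finset.range n, τ k A * τ (n - k) (1 - P)) * P = 0 := by
    rw [Finset.sum_mul]
    apply Finset.sum_eq_zero
    intro k hk
    have hk' : 1 ≤ n - k := by
      have := Finset.mem_range.mp hk
      omega
    obtain ⟨s, hs⟩ := hτQ (n - k) hk'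
    rw [hs]
    calc τ k A * (P * s * (1 - P)) * P
        = τ k A * (P * s) * ((1 - P) * P) := by noncomm_ring
      _ = 0 := by rw [hQP, mul_zero]
  have hP0 : τ n A * P = 0 := by
    have := congrArg (· * P) hexp
    simp only [add_mul] at this
    rw [hsumP, zero_add, mul_assoc, hQP, mul_zero] at this
    exact this
  have hfix : τ n A = τ n A * (1 - P) := by
    rw [mul_sub, mul_one, hP0, sub_zero]
  refine ⟨τ n A, τ n A, ?_⟩
  calc τ n A = (1 - P + P) * (τ n A * (1 - P)) := by
        rw [← hfix]; noncomm_ring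
    _ = (1 - P) * τ n A * (1 - P) + P * τ n A * (1 - P) := by noncomm_ring
end

section
/- Let U = Tri(A, M, B) be a triangular ring with standard idempotent P and Q = I − P. If G = (δ_i)_{i∈ℕ} is an additive generalized Jordan higher derivation on U with relating Jordan higher derivation D = (τ_i) satisfying τ_n(P), τ_n(Q) ∈ PUQ for n ≥ 1, and δ_m satisfies δ_m(P) ∈ PUP + PUQ for all m < n, then δ_n(P) ∈ PUP + PUQ. -/
set_option linter.unusedSectionVars false

/-- The triangular ring `Tri A M B` of formal upper triangular matrices
`[[a, m], [0, b]]` with `a ∈ A`, `m ∈ M`, `b ∈ B`, where `M` is an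
`(A, B)`-bimodule (the right `B`-action encoded as a left `Bᵐᵒᵖ`-action). -/
@[ext]
structure Tri (A M B : Type*) where
  a : A
  m : M
  b : B

namespace Tri

variable {A M B : Type*} [Ring A] [Ring B] [AddCommGroup M]
  [Module A M] [Module Bᵐᵒᵖ M] [SMulCommClass A Bᵐᵒᵖ M]

instance : Add (Tri A M B) := ⟨fun x y => ⟨x.a + y.a, x.m + y.m, x.b + y.b⟩⟩
instance : Zero (Tri A M B) := ⟨⟨0, 0, 0⟩⟩
instance : Neg (Tri A M B) := ⟨fun x => ⟨-x.a, -x.m, -x.b⟩⟩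
instance : One (Tri A M B) := ⟨⟨1, 0, 1⟩⟩
instance : Mul (Tri A M B) :=
  ⟨fun x y => ⟨x.a * y.a, x.a • y.m + MulOpposite.op y.b • x.m, x.b * y.b⟩⟩

@[simp] lemma add_a (x y : Tri A M B) : (x + y).a = x.a + y.a := rfl
@[simp] lemma add_m (x y : Tri A M B) : (x + y).m = x.m + y.m := rfl
@[simp] lemma add_b (x y : Tri A M B) : (x + y).b = x.b + y.b := rfl
@[simp] lemma zero_a : (0 : Tri A M B).a = 0 := rfl
@[simp] lemma zero_m : (0 : Tri A M B).m = 0 := rfl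
@[simp] lemma zero_b : (0 : Tri A M B).b = 0 := rfl
@[simp] lemma neg_a (x : Tri A M B) : (-x).a = -x.a := rfl
@[simp] lemma neg_m (x : Tri A M B) : (-x).m = -x.m := rfl
@[simp] lemma neg_b (x : Tri A M B) : (-x).b = -x.b := rfl
@[simp] lemma one_a : (1 : Tri A M B).a = 1 := rfl
@[simp] lemma one_m : (1 : Tri A M B).m = 0 := rfl
@[simp] lemma one_b : (1 : Tri A M B).b = 1 := rfl
@[simp] lemma mul_a (x y : Tri A M B) : (x * y).a = x.a * y.a := rfl
@[simp] lemma mul_m (x y : Tri A M B) :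
    (x * y).m = x.a • y.m + MulOpposite.op y.b • x.m := rfl
@[simp] lemma mul_b (x y : Tri A M B) : (x * y).b = x.b * y.b := rfl

/-- The triangular ring structure on `Tri A M B`. -/
instance : Ring (Tri A M B) where
  add_assoc x y z := by ext <;> simp [add_assoc]
  zero_add x := by ext <;> simp
  add_zero x := by ext <;> simp
  add_comm x y := by ext <;> simp [add_comm]
  neg_add_cancel x := by ext <;> simp
  nsmul := nsmulRec
  zsmul := zsmulRec
  left_distrib x y z := by ext <;> simp [mul_add, smul_add, add_smul] <;> abel
  right_distrib x y z := by ext <;> simp [add_mul, smul_add, add_smul] <;> abel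
  zero_mul x := by ext <;> simp
  mul_zero x := by ext <;> simp
  mul_assoc x y z := by
    ext <;> simp [mul_assoc, mul_smul, smul_add, smul_comm] <;> abel
  one_mul x := by ext <;> simp
  mul_one x := by ext <;> simp

end Tri

variable (A M B : Type*) [Ring A] [Ring B] [AddCommGroup M]
  [Module A M] [Module Bᵐᵒᵖ M] [SMulCommClass A Bᵐᵒᵖ M]

/-- The standard idempotent `P = [[1,0],[0,0]]` of the triangular ring. -/
def Tri.P : Tri A M B := ⟨1, 0, 0⟩

variable {A M B}

/-- Membership in the corner `P·U·Q` of the triangular ring `U`,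
where `Q = 1 - P`. -/
def Tri.inPUQ (x : Tri A M B) : Prop :=
  ∃ s : Tri A M B, x = Tri.P A M B * s * (1 - Tri.P A M B)

/-- Membership in `P·U·P + P·U·Q`. -/
def Tri.inPUPQ (x : Tri A M B) : Prop :=
  ∃ s t : Tri A M B,
    x = Tri.P A M B * s * Tri.P A M B + Tri.P A M B * t * (1 - Tri.P A M B)

/-- Membership in `Q·U·Q + P·U·Q`. -/
def Tri.inQUQQ (x : Tri A M B) : Prop :=
  ∃ s t : Tri A M B,
    x = (1 - Tri.P A M B) * s * (1 - Tri.P A M B) +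
      Tri.P A M B * t * (1 - Tri.P A M B)

/-!
The `B`-corner `x ↦ x.b` is a ring homomorphism `Tri A M B →+* B`, and `PUP + PUQ` is exactly
its kernel. Applying it to `δₙ(P) = δₙ(P²) = ∑ δᵢ(P) τⱼ(P)` kills every term, because
`τ₀(P) = P` and `τⱼ(P) ∈ PUQ` for `j ≥ 1` both have zero `B`-corner.
-/

namespace Tri

def bRingHom : Tri A M B →+* B where
  toFun := Tri.b
  map_one' := rfl
  map_mul' _ _ := rfl
  map_zero' := rfl
  map_add' _ _ := rfl

@[simp] lemma bRingHom_apply (x : Tri A M B) : bRingHom x = x.b := rfl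

lemma isIdempotentElem_P : IsIdempotentElem (P A M B) := by
  ext <;> simp [P]

lemma one_sub_P : 1 - P A M B = ⟨0, 0, 1⟩ := by
  ext <;> simp [P, sub_eq_add_neg]

lemma inPUQ.b_eq_zero {x : Tri A M B} (hx : x.inPUQ) : x.b = 0 := by
  obtain ⟨s, rfl⟩ := hx
  simp [P]

lemma inPUPQ_iff_b_eq_zero {x : Tri A M B} : x.inPUPQ ↔ x.b = 0 := by
  constructor
  · rintro ⟨s, t, rfl⟩
    simp [P]
  · intro hx
    refine ⟨⟨x.a, 0, 0⟩, ⟨0, x.m, 0⟩, ?_⟩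
    rw [one_sub_P]
    ext <;> simp [P, hx]

lemma b_eq_zero_of_isIdempotentElem {δ τ : ℕ → Tri A M B → Tri A M B} {e : Tri A M B} {n : ℕ}
    (he : IsIdempotentElem e)
    (hδJ : δ n (e * e) = ∑ ij ∈ Finset.HasAntidiagonal.antidiagonal n, δ ij.1 e * τ ij.2 e)
    (hτ : ∀ j, (τ j e).b = 0) :
    (δ n e).b = 0 := by
  rw [he.eq] at hδJ
  simpa [hτ] using congrArg bRingHom hδJ

end Tri

theorem stmt6_general (δ τ : ℕ → Tri A M B → Tri A M B) (n : ℕ)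
    (hτ0 : τ 0 = id)
    (hδJ : ∀ k X, δ k (X * X) = ∑ ij ∈ Finset.HasAntidiagonal.antidiagonal k, δ ij.1 X * τ ij.2 X)
    (hτP : ∀ k, 1 ≤ k → Tri.inPUQ (τ k (Tri.P A M B))) :
    Tri.inPUPQ (δ n (Tri.P A M B)) := by
  have hτb : ∀ j, (τ j (Tri.P A M B)).b = 0 := by
    rintro (_ | j)
    · rw [hτ0]
      rfl
    · exact (hτP (j + 1) j.succ_pos).b_eq_zero
  exact Tri.inPUPQ_iff_b_eq_zero.mpr
    (Tri.b_eq_zero_of_isIdempotentElem Tri.isIdempotentElem_P (hδJ n _) hτb)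

/-- Step 1 of Theorem 3.1: under the inductive hypotheses,
`δ_n(P) ∈ PUP + PUQ` for the standard idempotent `P` of the triangular ring. -/
theorem stmt6 (δ τ : ℕ → Tri A M B → Tri A M B) (n : ℕ)
    (hδ0 : δ 0 = id) (hτ0 : τ 0 = id)
    (hδadd : ∀ k X Y, δ k (X + Y) = δ k X + δ k Y)
    (hτadd : ∀ k X Y, τ k (X + Y) = τ k X + τ k Y)
    (hτJ : ∀ k X, τ k (X * X) = ∑ ij ∈ Finset.HasAntidiagonal.antidiagonal k, τ ij.1 X * τ ij.2 X)
    (hδJ : ∀ k X, δ k (X * X) = ∑ ij ∈ Finset.HasAntidiagonal.antidiagonal k, δ ij.1 X * τ ij.2 X)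
    (hτP : ∀ k, 1 ≤ k → Tri.inPUQ (τ k (Tri.P A M B)))
    (hτQ : ∀ k, 1 ≤ k → Tri.inPUQ (τ k (1 - Tri.P A M B)))
    (hδmP : ∀ m < n, Tri.inPUPQ (δ m (Tri.P A M B))) :
    Tri.inPUPQ (δ n (Tri.P A M B)) :=
  stmt6_general δ τ n hτ0 hδJ hτP
end

section
/- Let U = Tri(A, M, B) be a triangular ring with standard idempotent P and Q = I − P. Suppose G = (δ_i)_{i∈ℕ} is an additive generalized Jordan higher derivation on U with relating higher derivation D = (τ_i). If δ_m(PUQ) ⊆ PUQ and δ_m(P) ∈ PUP + PUQ hold for all m < n, and δ_n(P) ∈ PUP + PUQ, then δ_n(PXQ) ∈ PUQ for every X ∈ U. -/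
set_option linter.unusedSectionVars false

variable (A M B : Type*) [Ring A] [Ring B] [AddCommGroup M]
  [Module A M] [Module Bᵐᵒᵖ M] [SMulCommClass A Bᵐᵒᵖ M]

variable {A M B}

/-! An element of `U` lies in `PUQ` exactly when its diagonal entries vanish, so `PUQ` is an
ideal of `U`.

Take `Y = 1` in the generalized Jordan identity for `W = PXQ`: `δ_n(2W)` equals
`δ_n(W) + δ_n(1) W` plus terms `δ_i(W) τ_j(1) + δ_i(1) τ_j(W)` with `j ≥ 1`. Both `W` and
`τ_j(1) = τ_j(P) + τ_j(Q)` lie in the ideal `PUQ`, so `δ_n(W) ∈ PUQ`. -/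

namespace Tri

variable {A M B : Type*} [Ring A] [Ring B] [AddCommGroup M]
  [Module A M] [Module Bᵐᵒᵖ M] [SMulCommClass A Bᵐᵒᵖ M]

lemma inPUQ_iff {x : Tri A M B} : x.inPUQ ↔ x.a = 0 ∧ x.b = 0 := by
  constructor
  · rintro ⟨s, rfl⟩
    simp [P, sub_eq_add_neg]
  · rintro ⟨ha, hb⟩
    exact ⟨x, by ext <;> simp [P, sub_eq_add_neg, ha, hb]⟩

lemma inPUQ_P_mul_mul_one_sub_P (X : Tri A M B) : (P A M B * X * (1 - P A M B)).inPUQ :=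
  ⟨X, rfl⟩

lemma inPUQ_zero : (0 : Tri A M B).inPUQ :=
  inPUQ_iff.2 ⟨rfl, rfl⟩

lemma inPUQ.add {x y : Tri A M B} (hx : x.inPUQ) (hy : y.inPUQ) : (x + y).inPUQ := by
  rw [inPUQ_iff] at *
  simp [hx, hy]

lemma inPUQ.mul_left {y : Tri A M B} (x : Tri A M B) (hy : y.inPUQ) : (x * y).inPUQ := by
  rw [inPUQ_iff] at *
  simp [hy]

lemma inPUQ_sum {ι : Type*} {s : Finset ι} {f : ι → Tri A M B} (hf : ∀ i ∈ s, (f i).inPUQ) :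
    (∑ i ∈ s, f i).inPUQ :=
  Finset.sum_induction f inPUQ (fun _ _ => inPUQ.add) inPUQ_zero hf

end Tri

theorem stmt7_general (δ τ : ℕ → Tri A M B → Tri A M B) (n : ℕ)
    (hτ0 : τ 0 = id)
    (hδadd : ∀ k X Y, δ k (X + Y) = δ k X + δ k Y)
    (hτadd : ∀ k X Y, τ k (X + Y) = τ k X + τ k Y)
    (hτP : ∀ k, 1 ≤ k → Tri.inPUQ (τ k (Tri.P A M B)))
    (hτQ : ∀ k, 1 ≤ k → Tri.inPUQ (τ k (1 - Tri.P A M B)))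
    (hτPUQ : ∀ k X, Tri.inPUQ (τ k (Tri.P A M B * X * (1 - Tri.P A M B))))
    (hLem : ∀ X Y, δ n (X * Y + Y * X) =
      ∑ ij ∈ Finset.HasAntidiagonal.antidiagonal n, (δ ij.1 X * τ ij.2 Y + δ ij.1 Y * τ ij.2 X)) :
    ∀ X, Tri.inPUQ (δ n (Tri.P A M B * X * (1 - Tri.P A M B))) := by
  intro X
  set W := Tri.P A M B * X * (1 - Tri.P A M B)
  have hτ1 : ∀ k, 1 ≤ k → (τ k 1).inPUQ := fun k hk => by
    simpa [← hτadd] using (hτP k hk).add (hτQ k hk)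
  have hhigher : ∀ ij : ℕ × ℕ, ij ∈ (Finset.HasAntidiagonal.antidiagonal n).erase (n, 0) →
      (δ ij.1 W * τ ij.2 1 + δ ij.1 1 * τ ij.2 W).inPUQ := by
    rintro ⟨i, j⟩ hij
    obtain ⟨hne, hsum⟩ := Finset.mem_erase.1 hij
    have hj : 1 ≤ j := Nat.pos_of_ne_zero (by rintro rfl; simp_all)
    exact ((hτ1 j hj).mul_left _).add ((hτPUQ j X).mul_left _)
  have hn0 : ((n, 0) : ℕ × ℕ) ∈ Finset.HasAntidiagonal.antidiagonal n := by simp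
  have key := hLem W 1
  rw [mul_one, one_mul, hδadd, ← Finset.add_sum_erase _ _ hn0] at key
  simp only [hτ0, id, mul_one, add_assoc] at key
  rw [add_left_cancel key]
  exact ((Tri.inPUQ_P_mul_mul_one_sub_P X).mul_left _).add (Tri.inPUQ_sum hhigher)

/-- Step 2 of Theorem 3.1: under the inductive hypotheses at stage `n`,
`δ_n(PXQ) ∈ PUQ` for every `X` in the triangular ring. -/
theorem stmt7 (δ τ : ℕ → Tri A M B → Tri A M B) (n : ℕ)
    (hδ0 : δ 0 = id) (hτ0 : τ 0 = id)
    (hδadd : ∀ k X Y, δ k (X + Y) = δ k X + δ k Y)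
    (hτadd : ∀ k X Y, τ k (X + Y) = τ k X + τ k Y)
    (hτHD : ∀ k X Y, τ k (X * Y) = ∑ ij ∈ Finset.HasAntidiagonal.antidiagonal k, τ ij.1 X * τ ij.2 Y)
    (hτP : ∀ k, 1 ≤ k → Tri.inPUQ (τ k (Tri.P A M B)))
    (hτQ : ∀ k, 1 ≤ k → Tri.inPUQ (τ k (1 - Tri.P A M B)))
    (hτPUQ : ∀ k X, Tri.inPUQ (τ k (Tri.P A M B * X * (1 - Tri.P A M B))))
    (hLem : ∀ X Y, δ n (X * Y + Y * X) =
      ∑ ij ∈ Finset.HasAntidiagonal.antidiagonal n, (δ ij.1 X * τ ij.2 Y + δ ij.1 Y * τ ij.2 X))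
    (hδmPUQ : ∀ m < n, ∀ X, Tri.inPUQ (δ m (Tri.P A M B * X * (1 - Tri.P A M B))))
    (hδmP : ∀ m < n, Tri.inPUPQ (δ m (Tri.P A M B)))
    (hδnP : Tri.inPUPQ (δ n (Tri.P A M B))) :
    ∀ X, Tri.inPUQ (δ n (Tri.P A M B * X * (1 - Tri.P A M B))) :=
  stmt7_general δ τ n hτ0 hδadd hτadd hτP hτQ hτPUQ hLem
end

section
/- Let U be a triangular ring with standard idempotent P, Q = I − P. Suppose G = (δ_i)_{i∈ℕ} is an additive generalized Jordan higher derivation on U with relating higher derivation D = (τ_i), and suppose δ_n(XYX) = Σ_{i+j+k=n} δ_i(X)τ_j(Y)τ_k(X) for all X, Y. If δ_i(P) ∈ PUP + PUQ for all i ≤ n, then δ_n(PXP) ∈ PUP + PUQ for all X ∈ U. -/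
set_option linter.unusedSectionVars false

variable (A M B : Type*) [Ring A] [Ring B] [AddCommGroup M]
  [Module A M] [Module Bᵐᵒᵖ M] [SMulCommClass A Bᵐᵒᵖ M]

variable {A M B}

/-! `PUP + PUQ = PU` is the right ideal of elements of `U` with vanishing `B`-corner. Expanding
`δ_n(P X P)` by the triple identity, every summand `δ_i(P) τ_j(X) τ_k(P)` starts with a factor
`δ_i(P)` of that ideal, hence lies in it. -/

namespace Tri

lemma inPUPQ.mul_right {x : Tri A M B} (hx : x.inPUPQ) (y : Tri A M B) : (x * y).inPUPQ := by
  rw [inPUPQ_iff_b_eq_zero] at hx ⊢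
  simp [hx]

lemma inPUPQ_sum {ι : Type*} (s : Finset ι) {f : ι → Tri A M B}
    (hf : ∀ i ∈ s, (f i).inPUPQ) : (∑ i ∈ s, f i).inPUPQ :=
  Finset.sum_induction f inPUPQ
    (fun x y hx hy => by
      rw [inPUPQ_iff_b_eq_zero] at hx hy ⊢
      simp [hx, hy])
    (inPUPQ_iff_b_eq_zero.mpr rfl) hf

end Tri

theorem stmt8_general (δ τ : ℕ → Tri A M B → Tri A M B) (n : ℕ)
    (hTriple : ∀ X Y, δ n (X * Y * X) =
      ∑ ij ∈ Finset.HasAntidiagonal.antidiagonal n, ∑ kl ∈ Finset.HasAntidiagonal.antidiagonal ij.2,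
        δ ij.1 X * τ kl.1 Y * τ kl.2 X)
    (hδiP : ∀ i ≤ n, Tri.inPUPQ (δ i (Tri.P A M B))) :
    ∀ X, Tri.inPUPQ (δ n (Tri.P A M B * X * Tri.P A M B)) := by
  intro X
  rw [hTriple]
  refine Tri.inPUPQ_sum _ fun ij hij => Tri.inPUPQ_sum _ fun kl _ => ?_
  rw [mul_assoc]
  exact (hδiP ij.1 (Finset.HasAntidiagonal.antidiagonal.fst_le hij)).mul_right _

/-- Step 3 of Theorem 3.1: if `δ_n(XYX) = Σ_{i+j+k=n} δ_i(X)τ_j(Y)τ_k(X)` and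
`δ_i(P) ∈ PUP + PUQ` for all `i ≤ n`, then `δ_n(PXP) ∈ PUP + PUQ`. -/
theorem stmt8 (δ τ : ℕ → Tri A M B → Tri A M B) (n : ℕ)
    (hδ0 : δ 0 = id) (hτ0 : τ 0 = id)
    (hTriple : ∀ X Y, δ n (X * Y * X) =
      ∑ ij ∈ Finset.HasAntidiagonal.antidiagonal n, ∑ kl ∈ Finset.HasAntidiagonal.antidiagonal ij.2,
        δ ij.1 X * τ kl.1 Y * τ kl.2 X)
    (hτP : ∀ k, 1 ≤ k → Tri.inPUQ (τ k (Tri.P A M B)))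
    (hτPUP : ∀ j X, Tri.inPUPQ (τ j (Tri.P A M B * X * Tri.P A M B)))
    (hδiP : ∀ i ≤ n, Tri.inPUPQ (δ i (Tri.P A M B))) :
    ∀ X, Tri.inPUPQ (δ n (Tri.P A M B * X * Tri.P A M B)) :=
  stmt8_general δ τ n hTriple hδiP
end

section
/- Let U be a triangular ring with standard idempotent P, Q = I − P, and let G = (δ_i) be an additive generalized Jordan higher derivation with relating higher derivation D = (τ_i), satisfying the inductive hypotheses of Theorem 3.1 at stage n. Then Σ_{i+j=n} δ_i(PXP)τ_j(QYQ) = 0 for all X, Y ∈ U. -/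
set_option linter.unusedSectionVars false

variable (A M B : Type*) [Ring A] [Ring B] [AddCommGroup M]
  [Module A M] [Module Bᵐᵒᵖ M] [SMulCommClass A Bᵐᵒᵖ M]

variable {A M B}

/-
In the Peirce decomposition for `P`, `PXP·QYQ` and `QYQ·PXP` both vanish, so expanding
`0 = δ_n(PXP·QYQ + QYQ·PXP)` by the Jordan-type identity leaves the wanted sum plus the terms
`δ_i(QYQ)τ_j(PXP)`. Each of these is zero: `δ_i(QYQ) ∈ QUQ + PUQ` ends in `Q`, while
`τ_j(PXP) ∈ PUP + PUQ` starts with `P`, and `QP = 0`.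
-/

namespace IsIdempotentElem

variable {R : Type*} [Ring R] {e : R}

lemma mul_mul_one_sub_mul (he : IsIdempotentElem e) (x y : R) : x * e * ((1 - e) * y) = 0 := by
  rw [mul_assoc, ← mul_assoc e, he.mul_one_sub_self, zero_mul, mul_zero]

lemma mul_one_sub_mul_mul (he : IsIdempotentElem e) (x y : R) : x * (1 - e) * (e * y) = 0 := by
  rw [mul_assoc, ← mul_assoc (1 - e), he.one_sub_mul_self, zero_mul, mul_zero]

lemma corner_mul_compl_corner (he : IsIdempotentElem e) (x y : R) :
    e * x * e * ((1 - e) * y * (1 - e)) = 0 := by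
  rw [mul_assoc _ y]
  exact he.mul_mul_one_sub_mul _ _

lemma compl_corner_mul_corner (he : IsIdempotentElem e) (x y : R) :
    (1 - e) * y * (1 - e) * (e * x * e) = 0 := by
  rw [mul_assoc _ x]
  exact he.mul_one_sub_mul_mul _ _

end IsIdempotentElem

namespace Tri

lemma inQUQQ.exists_eq_mul_one_sub_P {x : Tri A M B} (hx : x.inQUQQ) :
    ∃ s, x = s * (1 - P A M B) := by
  obtain ⟨s, t, rfl⟩ := hx
  exact ⟨(1 - P A M B) * s + P A M B * t, by rw [add_mul]⟩

lemma inPUPQ.exists_eq_P_mul {y : Tri A M B} (hy : y.inPUPQ) : ∃ t, y = P A M B * t := by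
  obtain ⟨s, t, rfl⟩ := hy
  exact ⟨s * P A M B + t * (1 - P A M B), by simp only [mul_add, mul_assoc]⟩

lemma inQUQQ.mul_eq_zero_of_inPUPQ {x y : Tri A M B} (hx : x.inQUQQ) (hy : y.inPUPQ) :
    x * y = 0 := by
  obtain ⟨s, rfl⟩ := hx.exists_eq_mul_one_sub_P
  obtain ⟨t, rfl⟩ := hy.exists_eq_P_mul
  exact isIdempotentElem_P.mul_one_sub_mul_mul s t

end Tri

theorem stmt11_general (δ τ : ℕ → Tri A M B → Tri A M B) (n : ℕ)
    (hδadd : ∀ k X Y, δ k (X + Y) = δ k X + δ k Y)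
    (hLem : ∀ X Y, δ n (X * Y + Y * X) =
      ∑ ij ∈ Finset.HasAntidiagonal.antidiagonal n, (δ ij.1 X * τ ij.2 Y + δ ij.1 Y * τ ij.2 X))
    (hδiQUQ : ∀ i ≤ n, ∀ X,
      Tri.inQUQQ (δ i ((1 - Tri.P A M B) * X * (1 - Tri.P A M B))))
    (hτPUP : ∀ j X, Tri.inPUPQ (τ j (Tri.P A M B * X * Tri.P A M B))) :
    ∀ X Y, ∑ ij ∈ Finset.HasAntidiagonal.antidiagonal n,
      δ ij.1 (Tri.P A M B * X * Tri.P A M B) *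
        τ ij.2 ((1 - Tri.P A M B) * Y * (1 - Tri.P A M B)) = 0 := by
  intro X Y
  have hP := Tri.isIdempotentElem_P (A := A) (M := M) (B := B)
  have hδn_zero : δ n 0 = 0 := by simpa using hδadd n 0 0
  have hcross : ∀ ij ∈ Finset.HasAntidiagonal.antidiagonal n,
      δ ij.1 ((1 - Tri.P A M B) * Y * (1 - Tri.P A M B)) * τ ij.2 (Tri.P A M B * X * Tri.P A M B)
        = 0 := fun ij hij =>
    (hδiQUQ ij.1 (Finset.HasAntidiagonal.antidiagonal.fst_le hij) Y).mul_eq_zero_of_inPUPQ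
      (hτPUP ij.2 X)
  have h := hLem (Tri.P A M B * X * Tri.P A M B) ((1 - Tri.P A M B) * Y * (1 - Tri.P A M B))
  rw [hP.corner_mul_compl_corner, hP.compl_corner_mul_corner, add_zero, hδn_zero,
    Finset.sum_add_distrib, Finset.sum_eq_zero hcross, add_zero] at h
  exact h.symm

/-- Step 5(5) of Theorem 3.1: under the inductive hypotheses at stage `n`,
`Σ_{i+j=n} δ_i(PXP)τ_j(QYQ) = 0`. -/
theorem stmt11 (δ τ : ℕ → Tri A M B → Tri A M B) (n : ℕ)
    (hδ0 : δ 0 = id) (hτ0 : τ 0 = id)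
    (hδadd : ∀ k X Y, δ k (X + Y) = δ k X + δ k Y)
    (hLem : ∀ X Y, δ n (X * Y + Y * X) =
      ∑ ij ∈ Finset.HasAntidiagonal.antidiagonal n, (δ ij.1 X * τ ij.2 Y + δ ij.1 Y * τ ij.2 X))
    (hδiPUP : ∀ i ≤ n, ∀ X, Tri.inPUPQ (δ i (Tri.P A M B * X * Tri.P A M B)))
    (hδiQUQ : ∀ i ≤ n, ∀ X,
      Tri.inQUQQ (δ i ((1 - Tri.P A M B) * X * (1 - Tri.P A M B))))
    (hτPUP : ∀ j X, Tri.inPUPQ (τ j (Tri.P A M B * X * Tri.P A M B)))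
    (hτQUQ : ∀ j X, Tri.inQUQQ (τ j ((1 - Tri.P A M B) * X * (1 - Tri.P A M B)))) :
    ∀ X Y, ∑ ij ∈ Finset.HasAntidiagonal.antidiagonal n,
      δ ij.1 (Tri.P A M B * X * Tri.P A M B) *
        τ ij.2 ((1 - Tri.P A M B) * Y * (1 - Tri.P A M B)) = 0 :=
  stmt11_general δ τ n hδadd hLem hδiQUQ hτPUP
end

section
/- Let U be a triangular ring with standard idempotent P, Q = I − P, and let G = (δ_i) be an additive generalized Jordan higher derivation with relating higher derivation D = (τ_i), with all inductive hypotheses of Theorem 3.1 through stage n − 1 and δ_n(XYX) = Σ_{i+j+k=n}δ_i(X)τ_j(Y)τ_k(X). Then δ_n(PXPYP)Q = Σ_{i+j=n, i≠n} δ_i(PXP)τ_j(PYP) Q for all X, Y ∈ U. -/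
set_option linter.unusedSectionVars false

variable (A M B : Type*) [Ring A] [Ring B] [AddCommGroup M]
  [Module A M] [Module Bᵐᵒᵖ M] [SMulCommClass A Bᵐᵒᵖ M]

variable {A M B}

/-!
With `Q = 1 - P` and `PXPYP = P (XPY) P`, both sides become the triple sum
`Σ_{a+b+c=n} δ_a(PXP) τ_b(PY) τ_c(P) Q`. On the left, the triple identity gives
`Σ_{a+b+c=n} δ_a(P) τ_b(XPY) τ_c(P) Q`; its `c = 0` terms vanish since `τ_0(P) Q = PQ = 0`, and in
every other term `m = a + b < n`, so the inner sum over `a + b = m` is `δ_m(P · XPY) = δ_m(PXP · PY)`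
and may be re-expanded by the stage-`m` product rule. On the right, the excluded term
`δ_n(PXP) τ_0(PYP) Q` vanishes too, and `τ_j(PY · P)` expands since `τ` is a higher derivation.
-/

open Finset

namespace Finset.Nat

theorem sum_antidiagonal_assoc {M : Type*} [AddCommMonoid M] (n : ℕ) (f : ℕ → ℕ → ℕ → M) :
    ∑ ij ∈ antidiagonal n, ∑ kl ∈ antidiagonal ij.2, f ij.1 kl.1 kl.2 =
      ∑ ij ∈ antidiagonal n, ∑ kl ∈ antidiagonal ij.1, f kl.1 kl.2 ij.2 := by
  rw [sum_sigma', sum_sigma']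
  refine sum_nbij' (fun x => ⟨(x.1.1 + x.2.1, x.2.2), (x.1.1, x.2.1)⟩)
    (fun x => ⟨(x.2.1, x.2.2 + x.1.2), (x.2.2, x.1.2)⟩) ?_ ?_ ?_ ?_ ?_ <;>
    rintro ⟨⟨a, b⟩, ⟨c, d⟩⟩ hx <;> simp_all [mem_sigma, HasAntidiagonal.mem_antidiagonal] <;> omega

theorem sum_antidiagonal_mul_congr_of_lt {R : Type*} [NonUnitalNonAssocSemiring R] {n : ℕ}
    {f g h : ℕ → R} (hfg : ∀ m < n, f m = g m) (h0 : h 0 = 0) :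
    ∑ ij ∈ antidiagonal n, f ij.1 * h ij.2 = ∑ ij ∈ antidiagonal n, g ij.1 * h ij.2 := by
  refine sum_congr rfl fun ⟨m, c⟩ hmc => ?_
  rcases Nat.eq_zero_or_pos c with rfl | hc
  · simp only [h0, mul_zero]
  · rw [hfg m (by rw [HasAntidiagonal.mem_antidiagonal] at hmc; omega)]

end Finset.Nat

open Finset.Nat

theorem Tri.isIdempotentElem_P_s13 : IsIdempotentElem (Tri.P A M B) := by
  ext <;> simp [Tri.P]

section CornerIdentity

variable {R : Type*} [Ring R] {p : R} {δ τ : ℕ → R → R} {n : ℕ}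

theorem delta_corner_mul_one_sub_eq_triple_sum (hp : IsIdempotentElem p) (hτ0 : τ 0 = id)
    (hδm : ∀ m < n, ∀ x y, δ m (x * y) = ∑ ij ∈ antidiagonal m, δ ij.1 x * τ ij.2 y)
    (hTriple : ∀ x y, δ n (x * y * x) =
      ∑ ij ∈ antidiagonal n, ∑ kl ∈ antidiagonal ij.2, δ ij.1 x * τ kl.1 y * τ kl.2 x)
    (x y : R) :
    δ n (p * x * p * y * p) * (1 - p) =
      ∑ ij ∈ antidiagonal n,
        (∑ kl ∈ antidiagonal ij.1, δ kl.1 (p * x * p) * τ kl.2 (p * y)) * (τ ij.2 p * (1 - p)) := by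
  have hcorner : p * (x * p * y) = p * x * p * (p * y) := by
    simp only [mul_assoc, hp.eq, ← mul_assoc p p]
  calc δ n (p * x * p * y * p) * (1 - p)
      = δ n (p * (x * p * y) * p) * (1 - p) := by simp only [mul_assoc]
    _ = ∑ ij ∈ antidiagonal n, (∑ kl ∈ antidiagonal ij.1, δ kl.1 p * τ kl.2 (x * p * y)) *
          (τ ij.2 p * (1 - p)) := by
        rw [hTriple]
        simp only [sum_mul]
        rw [sum_antidiagonal_assoc n
          (fun a b c => δ a p * τ b (x * p * y) * τ c p * (1 - p))]
        simp only [mul_assoc]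
    _ = _ := sum_antidiagonal_mul_congr_of_lt
        (f := fun m => ∑ kl ∈ antidiagonal m, δ kl.1 p * τ kl.2 (x * p * y))
        (g := fun m => ∑ kl ∈ antidiagonal m, δ kl.1 (p * x * p) * τ kl.2 (p * y))
        (h := fun c => τ c p * (1 - p))
        (fun m hm => by simp only [← hδm m hm, hcorner])
        (by rw [hτ0, id, hp.mul_one_sub_self])

theorem corner_sum_mul_one_sub_eq_triple_sum (hp : IsIdempotentElem p) (hτ0 : τ 0 = id)
    (hτHD : ∀ k x y, τ k (x * y) = ∑ ij ∈ antidiagonal k, τ ij.1 x * τ ij.2 y) (x y : R) :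
    (∑ ij ∈ (antidiagonal n).filter (fun ij => ij.1 ≠ n),
        δ ij.1 (p * x * p) * τ ij.2 (p * y * p)) * (1 - p) =
      ∑ ij ∈ antidiagonal n,
        (∑ kl ∈ antidiagonal ij.1, δ kl.1 (p * x * p) * τ kl.2 (p * y)) * (τ ij.2 p * (1 - p)) := by
  rw [sum_mul, sum_filter_of_ne]
  · simp only [hτHD _ (p * y) p, mul_sum, sum_mul]
    rw [sum_antidiagonal_assoc n
      (fun a b c => δ a (p * x * p) * (τ b (p * y) * τ c p) * (1 - p))]
    simp only [mul_assoc]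
  · rintro ⟨i, j⟩ hij hne rfl
    obtain rfl : j = 0 := by rw [HasAntidiagonal.mem_antidiagonal] at hij; omega
    exact hne (by simp only [hτ0, id, mul_assoc, hp.mul_one_sub_self, mul_zero])

end CornerIdentity

theorem stmt13_general (δ τ : ℕ → Tri A M B → Tri A M B) (n : ℕ)
    (hτ0 : τ 0 = id)
    (hτHD : ∀ k X Y, τ k (X * Y) = ∑ ij ∈ Finset.HasAntidiagonal.antidiagonal k, τ ij.1 X * τ ij.2 Y)
    (hδm : ∀ m < n, ∀ X Y, δ m (X * Y) =
      ∑ ij ∈ Finset.HasAntidiagonal.antidiagonal m, δ ij.1 X * τ ij.2 Y)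
    (hTriple : ∀ X Y, δ n (X * Y * X) =
      ∑ ij ∈ Finset.HasAntidiagonal.antidiagonal n, ∑ kl ∈ Finset.HasAntidiagonal.antidiagonal ij.2,
        δ ij.1 X * τ kl.1 Y * τ kl.2 X) :
    ∀ X Y, δ n (Tri.P A M B * X * Tri.P A M B * Y * Tri.P A M B) * (1 - Tri.P A M B) =
      (∑ ij ∈ (Finset.HasAntidiagonal.antidiagonal n).filter (fun ij => ij.1 ≠ n),
        δ ij.1 (Tri.P A M B * X * Tri.P A M B) *
          τ ij.2 (Tri.P A M B * Y * Tri.P A M B)) * (1 - Tri.P A M B) := fun X Y => by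
  rw [delta_corner_mul_one_sub_eq_triple_sum Tri.isIdempotentElem_P_s13 hτ0 hδm hTriple,
    corner_sum_mul_one_sub_eq_triple_sum Tri.isIdempotentElem_P_s13 hτ0 hτHD]

/-- Step 5(1) of Theorem 3.1: under the inductive hypotheses through stage `n - 1`
together with the triple identity at stage `n`,
`δ_n(PXPYP)Q = (Σ_{i+j=n, i≠n} δ_i(PXP)τ_j(PYP))Q`. -/
theorem stmt13 (δ τ : ℕ → Tri A M B → Tri A M B) (n : ℕ)
    (hδ0 : δ 0 = id) (hτ0 : τ 0 = id)
    (hδadd : ∀ k X Y, δ k (X + Y) = δ k X + δ k Y)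
    (hτadd : ∀ k X Y, τ k (X + Y) = τ k X + τ k Y)
    (hτHD : ∀ k X Y, τ k (X * Y) = ∑ ij ∈ Finset.HasAntidiagonal.antidiagonal k, τ ij.1 X * τ ij.2 Y)
    (hτP : ∀ k, 1 ≤ k → Tri.inPUQ (τ k (Tri.P A M B)))
    (hδm : ∀ m < n, ∀ X Y, δ m (X * Y) =
      ∑ ij ∈ Finset.HasAntidiagonal.antidiagonal m, δ ij.1 X * τ ij.2 Y)
    (hTriple : ∀ X Y, δ n (X * Y * X) =
      ∑ ij ∈ Finset.HasAntidiagonal.antidiagonal n, ∑ kl ∈ Finset.HasAntidiagonal.antidiagonal ij.2,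
        δ ij.1 X * τ kl.1 Y * τ kl.2 X) :
    ∀ X Y, δ n (Tri.P A M B * X * Tri.P A M B * Y * Tri.P A M B) * (1 - Tri.P A M B) =
      (∑ ij ∈ (Finset.HasAntidiagonal.antidiagonal n).filter (fun ij => ij.1 ≠ n),
        δ ij.1 (Tri.P A M B * X * Tri.P A M B) *
          τ ij.2 (Tri.P A M B * Y * Tri.P A M B)) * (1 - Tri.P A M B) :=
  stmt13_general δ τ n hτ0 hτHD hδm hTriple
end
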